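/- arXiv:1508.01858 — 2 statements merged into one kernel-verified Lean document; each statement's English description precedes it below -/
import Mathlib

section
/- For every integer n ≥ 1, the n-th Cauchy number satisfies c_n = (−1)^n Σ_{k=1}^{n} (−1)^k · binom(n+1, k+1)/binom(n+k, n) · S1(n+k, k), where S1 denotes the unsigned Stirling numbers of the first kind. -/
/-! Substituting `z = -t` turns the defining identity into `A * u = 1`, where
`A(t) = Σ c_m (-t)^m / m!` and `u(t) = -log(1-t)/t` has constant term `1`. As `X^(n+1)` divides
`(1 - u)^(n+1) = 1 - u * Σ_j (-1)^j C(n+1, j+1) u^j`, taking the `t^n` coefficient after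
multiplying by `A` expresses `[t^n] A` through `[t^n] u^k = [t^(n+k)] (-log(1-t))^k`, which is
`k! S1(n+k, k) / (n+k)!`. -/

open scoped Classical
open PowerSeries Finset

noncomputable section

/-- The formal power series `log(1+z) = Σ_{m ≥ 1} (-1)^{m-1} z^m / m` in `ℚ⟦z⟧`. -/
def log1p : PowerSeries ℚ :=
  PowerSeries.mk fun m => if m = 0 then 0 else (-1 : ℚ) ^ (m - 1) / m

/-- The formal power series `log(1+z)/z` in `ℚ⟦z⟧`. -/
def log1pDivZ : PowerSeries ℚ :=
  PowerSeries.mk fun n => PowerSeries.coeff (R := ℚ) (n + 1) log1p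

/-- The formal power series `-log(1-t) = Σ_{m ≥ 1} t^m / m` in `ℚ⟦t⟧`. -/
def negLog1m : PowerSeries ℚ :=
  PowerSeries.mk fun m => if m = 0 then 0 else 1 / (m : ℚ)

theorem one_sub_pow_succ_eq_one_sub_mul_sum {R : Type*} [CommRing R] (u : R) (n : ℕ) :
    (1 - u) ^ (n + 1) =
      1 - u * ∑ j ∈ range (n + 1), (-1) ^ j * ((n + 1).choose (j + 1) : R) * u ^ j := by
  rw [sub_eq_add_neg, add_comm, add_pow, sum_range_succ', add_comm, mul_sum, sub_eq_add_neg,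
    ← sum_neg_distrib]
  congr 1
  · simp
  · exact sum_congr rfl fun j _ => by ring

namespace PowerSeries

variable {R : Type*} [CommRing R]

theorem coeff_eq_sum_choose_mul_coeff_pow_of_mul_eq_one {A u : R⟦X⟧} (hAu : A * u = 1)
    (hu : constantCoeff u = 1) (n : ℕ) :
    coeff n A =
      ∑ j ∈ range (n + 1), (-1) ^ j * ((n + 1).choose (j + 1) : R) * coeff n (u ^ j) := by
  have hX : (X : R⟦X⟧) ^ (n + 1) ∣ A * (1 - u) ^ (n + 1) :=
    (pow_dvd_pow_of_dvd (X_dvd_iff.mpr (by simp [hu])) _).mul_left A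
  have hvanish := X_pow_dvd_iff.mp hX n n.lt_succ_self
  rw [one_sub_pow_succ_eq_one_sub_mul_sum, mul_sub, mul_one, ← mul_assoc, hAu, one_mul,
    map_sub, sub_eq_zero] at hvanish
  rw [hvanish, map_sum]
  refine sum_congr rfl fun j _ => ?_
  rw [← map_natCast C, ← map_one C, ← map_neg C, ← map_pow C, ← map_mul C, coeff_C_mul]

theorem coeff_eq_sum_Icc_choose_mul_coeff_pow_of_mul_eq_one {A u : R⟦X⟧} (hAu : A * u = 1)
    (hu : constantCoeff u = 1) {n : ℕ} (hn : n ≠ 0) :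
    coeff n A = ∑ j ∈ Icc 1 n, (-1) ^ j * ((n + 1).choose (j + 1) : R) * coeff n (u ^ j) := by
  rw [coeff_eq_sum_choose_mul_coeff_pow_of_mul_eq_one hAu hu, Nat.range_succ_eq_Icc_zero,
    ← insert_Icc_add_one_left_eq_Icc (Nat.zero_le n), sum_insert (by simp)]
  simp [coeff_one, hn]

end PowerSeries

theorem X_mul_rescale_neg_one_log1pDivZ : X * rescale (-1 : ℚ) log1pDivZ = negLog1m := by
  ext (_ | m)
  · simp [negLog1m]
  · rw [coeff_succ_X_mul, coeff_rescale]
    simp only [log1pDivZ, log1p, negLog1m, coeff_mk, Nat.succ_ne_zero, if_false,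
      Nat.add_sub_cancel]
    rw [← mul_div_assoc, ← mul_pow, neg_one_mul, neg_neg, one_pow]

theorem constantCoeff_rescale_neg_one_log1pDivZ :
    constantCoeff (rescale (-1 : ℚ) log1pDivZ) = 1 := by
  simp [← coeff_zero_eq_constantCoeff_apply, log1pDivZ, log1p]

theorem coeff_rescale_neg_one_log1pDivZ_pow (n k : ℕ) :
    coeff n (rescale (-1 : ℚ) log1pDivZ ^ k) = coeff (n + k) (negLog1m ^ k) := by
  rw [← X_mul_rescale_neg_one_log1pDivZ, mul_pow, coeff_X_pow_mul]

/-- Proposition 2: for `n ≥ 1`,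
`c_n = (-1)^n Σ_{k=1}^n (-1)^k (C(n+1, k+1) / C(n+k, n)) · S1(n+k, k)`,
where `S1` are the unsigned Stirling numbers of the first kind. -/
theorem cauchy_eq_sum_stirlingFirst
    (c : ℕ → ℚ) (S1 : ℕ → ℕ → ℚ)
    (hc : (PowerSeries.mk fun n => c n / n.factorial) * log1pDivZ = 1)
    (hS1 : ∀ n k : ℕ,
      PowerSeries.coeff (R := ℚ) n (negLog1m ^ k) / k.factorial = S1 n k / n.factorial)
    (n : ℕ) (hn : 1 ≤ n) :
    c n = (-1 : ℚ) ^ n * ∑ k ∈ Finset.Icc 1 n,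
      (-1 : ℚ) ^ k * ((Nat.choose (n + 1) (k + 1) : ℚ) / (Nat.choose (n + k) n : ℚ)) *
        S1 (n + k) k := by
  set A := rescale (-1 : ℚ) (mk fun m => c m / m.factorial)
  have hA : A * rescale (-1) log1pDivZ = 1 := by
    simpa only [map_mul, map_one] using congrArg (rescale (-1 : ℚ)) hc
  have hcA : c n = (-1) ^ n * n.factorial * coeff n A := by
    rw [coeff_rescale, coeff_mk, mul_mul_mul_comm, ← mul_pow, neg_one_mul, neg_neg, one_pow,
      one_mul, mul_div_cancel₀ _ (by positivity)]
  have hcoeff_pow (k : ℕ) : coeff n (rescale (-1) log1pDivZ ^ k) =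
      S1 (n + k) k * k.factorial / (n + k).factorial := by
    rw [coeff_rescale_neg_one_log1pDivZ_pow, mul_div_right_comm, ← hS1,
      div_mul_cancel₀ _ (by positivity)]
  rw [hcA, coeff_eq_sum_Icc_choose_mul_coeff_pow_of_mul_eq_one hA
    constantCoeff_rescale_neg_one_log1pDivZ (Nat.one_le_iff_ne_zero.mp hn), mul_sum, mul_sum]
  refine sum_congr rfl fun k _ => ?_
  rw [hcoeff_pow, Nat.cast_add_choose]
  field_simp
end
end

section
/- For all integers n ≥ 1 and m ≥ 1, the n-th Cauchy-Carlitz number of order m satisfies CC_n^{(m)} = Π(n) · Σ_{k=1}^{n} (−1)^k Σ_{i_1,…,i_k ≥ 1, i_1+⋯+i_k = n} M^{(m)}(i_1) ⋯ M^{(m)}(i_k), where M^{(m)}(i) = Σ (−1)^{j_1 + ⋯ + j_m}/(L_{j_1} ⋯ L_{j_m}), the latter sum being over all m-tuples of integers j_1, …, j_m ≥ 0 with r^{j_1} + ⋯ + r^{j_m} = i + m. -/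
open scoped Classical
open PowerSeries Finset

noncomputable section

variable (F : Type) [Field F] [Fintype F]

/-- The rational function field `K = 𝔽_r(T)`. -/
abbrev K : Type := RatFunc F

/-- `r`, the cardinality of the finite field of constants. -/
def rr : ℕ := Fintype.card F

/-- The variable `T` of the rational function field. -/
def Tv : K F := RatFunc.X

/-- `[i] = T^{r^i} - T`. -/
def br (i : ℕ) : K F := Tv F ^ (rr F) ^ i - Tv F

/-- `D_0 = 1`, `D_i = [i] · D_{i-1}^r`. -/
def D : ℕ → K F
  | 0 => 1
  | i + 1 => br F (i + 1) * D i ^ rr F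

/-- `L_0 = 1`, `L_i = [i] · L_{i-1}`. -/
def L : ℕ → K F
  | 0 => 1
  | i + 1 => br F (i + 1) * L i

/-- The Carlitz factorial `Π(n) = ∏_j D_j^{c_j}`, where `c_j = n / r^j % r` are the
base-`r` digits of `n` (all digits with index `> n` vanish since `r ≥ 2`). -/
def Cf (n : ℕ) : K F := ∏ j ∈ Finset.range (n + 1), D F j ^ (n / (rr F) ^ j % rr F)

/-- The Carlitz logarithm `log_C(z) = Σ_{i ≥ 0} (-1)^i z^{r^i} / L_i`: the coefficient of
`z^m` is `(-1)^i / L_i` if `m = r^i` and `0` otherwise (note `i ≤ r^i = m` since `r ≥ 2`). -/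
def logC : PowerSeries (K F) :=
  PowerSeries.mk fun m =>
    ∑ i ∈ Finset.range (m + 1), if m = (rr F) ^ i then (-1 : K F) ^ i / L F i else 0

/-- The Carlitz exponential `e_C(z) = Σ_{i ≥ 0} z^{r^i} / D_i`. -/
def eC : PowerSeries (K F) :=
  PowerSeries.mk fun m =>
    ∑ i ∈ Finset.range (m + 1), if m = (rr F) ^ i then 1 / D F i else 0

/-- The power series `log_C(z)/z`. -/
def logCdivZ : PowerSeries (K F) :=
  PowerSeries.mk fun n => PowerSeries.coeff (n + 1) (logC F)

/-- The power series `e_C(z)/z`. -/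
def eCdivZ : PowerSeries (K F) :=
  PowerSeries.mk fun n => PowerSeries.coeff (n + 1) (eC F)

/-- `M^{(m)}(i) = Σ_{j_1,…,j_m ≥ 0, r^{j_1}+⋯+r^{j_m} = i+m} (-1)^{j_1+⋯+j_m}/(L_{j_1}⋯L_{j_m})`.
(Each `j_s` satisfies `j_s < r^{j_s} ≤ i + m`, so tuples drawn from `range (i+m+1)`
and filtered by the power-sum condition are exactly the tuples in question.) -/
def M (m i : ℕ) : K F :=
  ∑ j ∈ (Fintype.piFinset fun _ : Fin m => Finset.range (i + m + 1)).filter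
      (fun j => ∑ s, (rr F) ^ (j s) = i + m),
    (-1 : K F) ^ (∑ s, j s) / ∏ s, L F (j s)

/-! Write `(log_C(z)/z)^m = 1 + G` with `G(0) = 0`. Only the finitely many monomials of
`log_C(z)/z` of degree `≤ n` affect the coefficient of `z^n` in its `m`-th power, and
multiplying them out shows that the coefficient of `z^i` in `G` is `M^{(m)}(i)` for `i ≥ 1`.
The generating series of `CC_n^{(m)}/Π(n)` is `1/(1 + G) = Σ_k (-G)^k`; since `G^k` starts in
degree `k`, only `k ≤ n` contribute to `z^n`, and they do so through the compositions of `n`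
into `k` positive parts. -/

section PowerSeriesCoeff

variable {R : Type*} [CommRing R]

theorem PowerSeries.coeff_pow_eq_of_coeff_eq {φ ψ : R⟦X⟧} {n : ℕ}
    (h : ∀ j ≤ n, coeff j φ = coeff j ψ) (k : ℕ) : coeff n (φ ^ k) = coeff n (ψ ^ k) := by
  have hdvd : X ^ (n + 1) ∣ φ - ψ :=
    X_pow_dvd_iff.2 fun j hj => by rw [map_sub, h j (by omega), sub_self]
  have := X_pow_dvd_iff.1 (hdvd.trans (sub_dvd_pow_sub_pow φ ψ k)) n n.lt_succ_self
  rwa [map_sub, sub_eq_zero] at this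

theorem PowerSeries.coeff_sum_monomial_pow {ι : Type*} (s : Finset ι) (e : ι → ℕ) (c : ι → R)
    (k n : ℕ) :
    coeff n ((∑ i ∈ s, monomial (e i) (c i)) ^ k) =
      ∑ j ∈ (Fintype.piFinset fun _ : Fin k => s).filter (fun j => ∑ t, e (j t) = n),
        ∏ t, c (j t) := by
  rw [sum_pow', map_sum, sum_filter]
  refine sum_congr rfl fun j _ => ?_
  rw [prod_monomial, coeff_monomial]
  exact if_congr eq_comm rfl rfl

theorem PowerSeries.coeff_pow_eq_sum_compositions {φ : R⟦X⟧} (hφ : constantCoeff φ = 0)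
    (k n : ℕ) :
    coeff n (φ ^ k) =
      ∑ i ∈ (Fintype.piFinset fun _ : Fin k => Icc 1 n).filter (fun i => ∑ t, i t = n),
        ∏ t, coeff (i t) φ := by
  rw [coeff_pow_eq_of_coeff_eq (ψ := ∑ i ∈ Icc 1 n, monomial i (coeff i φ)),
    coeff_sum_monomial_pow]
  intro j hj
  rw [map_sum]
  simp only [coeff_monomial, sum_ite_eq, mem_Icc]
  rcases Nat.eq_zero_or_pos j with rfl | hj0
  · simpa using hφ
  · rw [if_pos ⟨hj0, hj⟩]

theorem PowerSeries.coeff_eq_sum_neg_one_pow_mul_coeff_pow {A G : R⟦X⟧}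
    (hG : constantCoeff G = 0) (h : A * (1 + G) = 1) (n : ℕ) :
    coeff n A = ∑ k ∈ range (n + 1), (-1) ^ k * coeff n (G ^ k) := by
  set Q := ∑ k ∈ range (n + 1), (-G) ^ k
  have hQ : Q * (1 + G) = 1 - (-G) ^ (n + 1) := by
    linear_combination -(geom_sum_mul (-G) (n + 1))
  have hAQ : A - Q = (-G) ^ (n + 1) * A := by
    linear_combination Q * h - A * hQ
  have hdvd : X ^ (n + 1) ∣ A - Q :=
    hAQ ▸ (pow_dvd_pow_of_dvd (X_dvd_iff.2 (by simp [hG])) _).mul_right A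
  have := X_pow_dvd_iff.1 hdvd n n.lt_succ_self
  rw [map_sub, sub_eq_zero] at this
  rw [this, map_sum]
  refine sum_congr rfl fun k _ => ?_
  rw [neg_pow, show (-1 : R⟦X⟧) ^ k = C ((-1) ^ k) by simp, coeff_C_mul]

end PowerSeriesCoeff

lemma one_lt_rr : 1 < rr F := Fintype.one_lt_card

lemma one_le_rr_pow (i : ℕ) : 1 ≤ rr F ^ i := Nat.one_le_pow _ _ (by have := one_lt_rr F; omega)

lemma br_ne_zero {i : ℕ} (hi : i ≠ 0) : br F i ≠ 0 := by
  have hpow : rr F ^ i ≠ 1 := (Nat.one_lt_pow hi (one_lt_rr F)).ne'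
  rw [br, Tv, sub_ne_zero, ← RatFunc.algebraMap_X, ← map_pow, Ne,
    (RatFunc.algebraMap_injective F).eq_iff]
  intro h
  exact hpow (by simpa using congrArg Polynomial.natDegree h)

lemma D_ne_zero (i : ℕ) : D F i ≠ 0 := by
  induction i with
  | zero => exact one_ne_zero
  | succ i ih => exact mul_ne_zero (br_ne_zero F i.succ_ne_zero) (pow_ne_zero _ ih)

lemma Cf_ne_zero (n : ℕ) : Cf F n ≠ 0 :=
  prod_ne_zero_iff.2 fun j _ => pow_ne_zero _ (D_ne_zero F j)

lemma sum_range_ite_eq_pow_of_le {M : Type*} [AddCommMonoid M] {b j N : ℕ} (hb : 1 < b)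
    (c : ℕ → M) (hN : j ≤ N) :
    ∑ i ∈ range N, (if j = b ^ i then c i else 0) =
      ∑ i ∈ range j, (if j = b ^ i then c i else 0) := by
  refine (sum_subset (range_subset_range.2 hN) fun i _ hi => if_neg ?_).symm
  have := Nat.lt_pow_self (n := i) hb
  simp only [mem_range, not_lt] at hi
  omega

lemma coeff_logCdivZ_eq_coeff_sum_monomial {j N : ℕ} (hj : j < N) :
    coeff j (logCdivZ F) =
      coeff j (∑ i ∈ range N, monomial (rr F ^ i - 1) ((-1 : K F) ^ i / L F i)) := by
  simp only [logCdivZ, logC, coeff_mk, map_sum, coeff_monomial]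
  rw [sum_range_ite_eq_pow_of_le (one_lt_rr F) _ (by omega : j + 1 ≤ j + 1 + 1)]
  rw [← sum_range_ite_eq_pow_of_le (one_lt_rr F) _ (by omega : j + 1 ≤ N)]
  exact sum_congr rfl fun i _ => if_congr (by have := one_le_rr_pow F i; omega) rfl rfl

lemma constantCoeff_logCdivZ : constantCoeff (logCdivZ F) = 1 := by
  have := (one_lt_rr F).ne'
  simp [← coeff_zero_eq_constantCoeff_apply, logCdivZ, logC, sum_range_succ, L, this.symm]

lemma coeff_logCdivZ_pow (m n : ℕ) : coeff n (logCdivZ F ^ m) = M F m n := by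
  rw [coeff_pow_eq_of_coeff_eq (fun j hj => coeff_logCdivZ_eq_coeff_sum_monomial F
      (N := n + m + 1) (by omega)), coeff_sum_monomial_pow, M]
  refine sum_congr (filter_congr fun j _ => ?_) fun j _ => ?_
  · have : ∑ t, (rr F ^ j t - 1 + 1) = ∑ t, rr F ^ j t :=
      sum_congr rfl fun t _ => Nat.sub_add_cancel (one_le_rr_pow F _)
    rw [sum_add_distrib, sum_const, card_univ, Fintype.card_fin, smul_eq_mul, mul_one] at this
    omega
  · rw [prod_div_distrib, prod_pow_eq_pow_sum]

theorem cauchyCarlitzHigherOrder_eq_sum_over_tuples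
    (CCho : ℕ → ℕ → K F)
    (hCCho : ∀ m : ℕ,
      (PowerSeries.mk fun n => CCho m n / Cf F n) * logCdivZ F ^ m = 1)
    (n m : ℕ) (hn : 1 ≤ n) :
    CCho m n = Cf F n * ∑ k ∈ Finset.Icc 1 n, (-1 : K F) ^ k *
      ∑ i ∈ (Fintype.piFinset fun _ : Fin k => Finset.Icc 1 n).filter
          (fun i => ∑ t, i t = n),
        ∏ t, M F m (i t) := by
  set G := logCdivZ F ^ m - 1
  have hG : constantCoeff G = 0 := by simp [G, constantCoeff_logCdivZ]
  have hinv : (mk fun n => CCho m n / Cf F n) * (1 + G) = 1 := by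
    rw [add_sub_cancel]; exact hCCho m
  have hcoeff_G {j : ℕ} (hj : 1 ≤ j) : coeff j G = M F m j := by
    rw [map_sub, coeff_logCdivZ_pow, coeff_one, if_neg (by omega), sub_zero]
  have hcoeff := coeff_eq_sum_neg_one_pow_mul_coeff_pow hG hinv n
  rw [coeff_mk, range_eq_Ico, sum_eq_sum_Ico_succ_bot n.add_one_pos, pow_zero, pow_zero,
    coeff_one, if_neg (by omega), mul_zero, zero_add, zero_add, Ico_add_one_right_eq_Icc] at hcoeff
  rw [← div_mul_cancel₀ (CCho m n) (Cf_ne_zero F n), hcoeff, mul_comm]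
  refine congrArg _ (sum_congr rfl fun k _ => congrArg _ ?_)
  rw [coeff_pow_eq_sum_compositions hG]
  refine sum_congr rfl fun i hi => prod_congr rfl fun t _ => hcoeff_G ?_
  exact (mem_Icc.1 (Fintype.mem_piFinset.1 (mem_filter.1 hi).1 t)).1
end
end
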